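/- For every real ε with 0 ≤ ε ≤ 1/6, define f_ε : ℕ → [0,1] by f_ε(0) = 1, f_ε(1) = 1−ε, f_ε(2) = 2/3, and f_ε(d) = min{3ε, 2/(d+1)} for d ≥ 3. If φ : ℕ → [0,1] is any lower bound for α_𝓛 (i.e., α_𝓛(G) ≥ ∑_{v ∈ V(G)} φ(d(v)) for every graph G), then there exists ε with 0 ≤ ε ≤ 1/6 such that φ(d) ≤ f_ε(d) for every d ∈ ℕ. -/

import Mathlib

/-- A graph is a linear forest if it is acyclic and every vertex has degree at most 2
(equivalently, every connected component is a path; a single vertex counts as a path). -/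
def IsLinearForest {α : Type*} (H : SimpleGraph α) : Prop :=
  H.IsAcyclic ∧ ∀ v, (H.neighborSet v).ncard ≤ 2

/-- The lower-bound function f_ε for linear forests. -/
noncomputable def fL (ε : ℝ) (d : ℕ) : ℝ :=
  if d = 0 then 1
  else if d = 1 then 1 - ε
  else if d = 2 then 2/3
  else min (3 * ε) (2 / ((d : ℝ) + 1))

open SimpleGraph Finset

/-- An induced linear forest in a complete graph has at most 2 vertices. -/
lemma clique_bound {n : ℕ} (S : Finset (Fin n))
    (h : IsLinearForest ((⊤ : SimpleGraph (Fin n)).induce (S : Set (Fin n)))) :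
    S.card ≤ 2 := by
  by_contra hc
  push_neg at hc
  obtain ⟨a, ha⟩ := (Finset.card_pos (s := S)).mp (by omega)
  obtain ⟨b, hb, hba⟩ := Finset.exists_mem_ne (s := S) (by omega) a
  have h2 : 0 < ((S.erase a).erase b).card := by
    have := Finset.card_erase_of_mem (Finset.mem_erase.mpr ⟨hba, hb⟩)
    have := Finset.card_erase_of_mem ha
    omega
  obtain ⟨c, hc'⟩ := Finset.card_pos.mp h2
  have hcb : c ≠ b := (Finset.mem_erase.mp hc').1
  have hca : c ≠ a := (Finset.mem_erase.mp (Finset.mem_erase.mp hc').2).1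
  have hcS : c ∈ S := (Finset.mem_erase.mp (Finset.mem_erase.mp hc').2).2
  set H := (⊤ : SimpleGraph (Fin n)).induce (S : Set (Fin n)) with hH
  have hA : ∀ x y : (S : Set (Fin n)), (x : Fin n) ≠ y → H.Adj x y := by
    intro x y hxy
    exact hxy
  let x : (S : Set (Fin n)) := ⟨a, by simpa using ha⟩
  let y : (S : Set (Fin n)) := ⟨b, by simpa using hb⟩
  let z : (S : Set (Fin n)) := ⟨c, by simpa using hcS⟩
  have hxy : H.Adj x y := hA x y (by simpa [x, y] using hba.symm)
  have hxz : H.Adj x z := hA x z (by simpa [x, z] using hca.symm)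
  have hzy : H.Adj z y := hA z y (by simpa [z, y] using hcb)
  let p1 : H.Walk x y := SimpleGraph.Walk.cons hxy SimpleGraph.Walk.nil
  let p2 : H.Walk x y := SimpleGraph.Walk.cons hxz (SimpleGraph.Walk.cons hzy SimpleGraph.Walk.nil)
  have hp1 : p1.IsPath := (SimpleGraph.Path.singleton hxy).2
  have hp2 : p2.IsPath := by
    simp [p2, SimpleGraph.Walk.cons_isPath_iff, hxy.ne, hxz.ne, hzy.ne]
  have heq := (SimpleGraph.isAcyclic_iff_path_unique.mp h.1) ⟨p1, hp1⟩ ⟨p2, hp2⟩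
  have hlen := congrArg (fun p : H.Path x y => p.1.length) heq
  simp [p1, p2] at hlen

lemma lemA (φ : ℕ → ℝ)
    (hlb : ∀ (V : Type) [Fintype V] [DecidableEq V] (G : SimpleGraph V) [DecidableRel G.Adj],
      ∃ S : Finset V, IsLinearForest (G.induce (S : Set V)) ∧
        ∑ v, φ (G.degree v) ≤ (S.card : ℝ))
    (d : ℕ) : ((d : ℝ) + 1) * φ d ≤ 2 := by
  obtain ⟨S, hS1, hS2⟩ := hlb (Fin (d + 1)) (⊤ : SimpleGraph (Fin (d + 1)))
  have hdeg : ∀ v : Fin (d + 1), (⊤ : SimpleGraph (Fin (d + 1))).degree v = d := by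
    intro v
    rw [SimpleGraph.complete_graph_degree]
    simp
  have hsum : ∑ v : Fin (d + 1), φ ((⊤ : SimpleGraph (Fin (d + 1))).degree v)
      = ((d : ℝ) + 1) * φ d := by
    simp only [hdeg, Finset.sum_const, Finset.card_univ, Fintype.card_fin, nsmul_eq_mul]
    push_cast
    ring
  have hcard : S.card ≤ 2 := clique_bound S hS1
  calc ((d : ℝ) + 1) * φ d = _ := hsum.symm
    _ ≤ (S.card : ℝ) := hS2
    _ ≤ 2 := by exact_mod_cast hcard

/-- The pendant graph: a clique on `Fin m` with 3 pendant leaves on each clique vertex. -/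
def pG (m : ℕ) : SimpleGraph (Fin m ⊕ Fin m × Fin 3) where
  Adj x y := match x, y with
    | Sum.inl i, Sum.inl j => i ≠ j
    | Sum.inl i, Sum.inr p => i = p.1
    | Sum.inr p, Sum.inl i => i = p.1
    | Sum.inr _, Sum.inr _ => False
  symm := by
    refine ⟨?_⟩
    rintro (i | p) (j | q) h
    · exact fun e => h e.symm
    · exact h
    · exact h
    · exact h
  loopless := by
    refine ⟨?_⟩
    rintro (i | p) h
    · exact h rfl
    · exact h

instance (m : ℕ) : DecidableRel (pG m).Adj := fun x y =>
  match x, y with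
  | Sum.inl i, Sum.inl j => inferInstanceAs (Decidable (i ≠ j))
  | Sum.inl i, Sum.inr p => inferInstanceAs (Decidable (i = p.1))
  | Sum.inr p, Sum.inl i => inferInstanceAs (Decidable (i = p.1))
  | Sum.inr _, Sum.inr _ => inferInstanceAs (Decidable False)

lemma pG_adj_inl_inl {m : ℕ} {i j : Fin m} : (pG m).Adj (Sum.inl i) (Sum.inl j) ↔ i ≠ j := Iff.rfl
lemma pG_adj_inl_inr {m : ℕ} {i : Fin m} {p : Fin m × Fin 3} :
    (pG m).Adj (Sum.inl i) (Sum.inr p) ↔ i = p.1 := Iff.rfl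
lemma pG_adj_inr_inl {m : ℕ} {i : Fin m} {p : Fin m × Fin 3} :
    (pG m).Adj (Sum.inr p) (Sum.inl i) ↔ i = p.1 := Iff.rfl
lemma pG_adj_inr_inr {m : ℕ} {p q : Fin m × Fin 3} :
    ¬ (pG m).Adj (Sum.inr p) (Sum.inr q) := fun h => h

lemma pG_degree_inl {m : ℕ} (i : Fin m) : (pG m).degree (Sum.inl i) = (m - 1) + 3 := by
  have hnb : (pG m).neighborFinset (Sum.inl i)
      = ((Finset.univ.erase i).image Sum.inl)
        ∪ ((Finset.univ : Finset (Fin 3)).image (fun k => Sum.inr (i, k))) := by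
    ext x
    rcases x with j | ⟨j, k⟩
    · simp [SimpleGraph.mem_neighborFinset, pG_adj_inl_inl, ne_comm]
    · simp [SimpleGraph.mem_neighborFinset, pG_adj_inl_inr, eq_comm]
  have hdisj : Disjoint ((Finset.univ.erase i).image (Sum.inl : Fin m → Fin m ⊕ Fin m × Fin 3))
      ((Finset.univ : Finset (Fin 3)).image (fun k => Sum.inr (i, k))) := by
    simp [Finset.disjoint_left]
  have hinj2 : Function.Injective (fun k : Fin 3 => (Sum.inr (i, k) : Fin m ⊕ Fin m × Fin 3)) := by
    intro a b hab
    simpa using hab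
  rw [SimpleGraph.degree, hnb, Finset.card_union_of_disjoint hdisj,
    Finset.card_image_of_injective _ Sum.inl_injective,
    Finset.card_image_of_injective _ hinj2,
    Finset.card_erase_of_mem (Finset.mem_univ i)]
  simp

lemma pG_degree_inr {m : ℕ} (p : Fin m × Fin 3) : (pG m).degree (Sum.inr p) = 1 := by
  have hnb : (pG m).neighborFinset (Sum.inr p) = {Sum.inl p.1} := by
    ext x
    rcases x with j | q
    · simp [SimpleGraph.mem_neighborFinset, pG_adj_inr_inl, eq_comm]
    · simp [SimpleGraph.mem_neighborFinset, pG_adj_inr_inr]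
  rw [SimpleGraph.degree, hnb]
  simp

/-- In the pendant graph, an induced linear forest has at most `3 m` vertices. -/
lemma pG_card_bound {m : ℕ} (S : Finset (Fin m ⊕ Fin m × Fin 3))
    (h : IsLinearForest ((pG m).induce (S : Set (Fin m ⊕ Fin m × Fin 3)))) :
    S.card ≤ 3 * m := by
  classical
  let proj : (Fin m ⊕ Fin m × Fin 3) → Fin m := fun x => match x with
    | Sum.inl i => i
    | Sum.inr p => p.1
  have hcard := Finset.card_eq_sum_card_fiberwise
    (f := proj) (s := S) (t := Finset.univ) (fun x _ => Finset.mem_univ _)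
  rw [hcard]
  have hfib : ∀ i : Fin m, (S.filter (fun x => proj x = i)).card ≤ 3 := by
    intro i
    set T : Finset (Fin m ⊕ Fin m × Fin 3) :=
      {Sum.inl i, Sum.inr (i, 0), Sum.inr (i, 1), Sum.inr (i, 2)} with hT
    have hsub : S.filter (fun x => proj x = i) ⊆ T := by
      intro x hx
      rcases Finset.mem_filter.mp hx with ⟨hxS, hxp⟩
      rcases x with j | ⟨j, k⟩
      · simp only [proj] at hxp
        simp [hT, hxp]
      · simp only [proj] at hxp
        subst hxp
        fin_cases k <;> simp [hT]
    have hTcard : T.card = 4 := by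
      simp [hT]
    by_contra hgt
    push_neg at hgt
    have h4 : T.card ≤ (S.filter (fun x => proj x = i)).card := by
      have := Finset.card_le_card hsub
      omega
    have heq := Finset.eq_of_subset_of_card_le hsub h4
    have hall : ∀ x ∈ T, x ∈ S := by
      intro x hx
      rw [← heq] at hx
      exact (Finset.mem_filter.mp hx).1
    have hiS : Sum.inl i ∈ S := hall _ (by simp [hT])
    have hkS : ∀ k : Fin 3, Sum.inr (i, k) ∈ S := by
      intro k
      apply hall
      fin_cases k <;> simp [hT]
    set H := (pG m).induce (S : Set (Fin m ⊕ Fin m × Fin 3)) with hH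
    let v : (S : Set (Fin m ⊕ Fin m × Fin 3)) := ⟨Sum.inl i, by simpa using hiS⟩
    let w : Fin 3 → (S : Set (Fin m ⊕ Fin m × Fin 3)) :=
      fun k => ⟨Sum.inr (i, k), by simpa using hkS k⟩
    have hadj : ∀ k, w k ∈ H.neighborSet v := by
      intro k
      simp only [SimpleGraph.mem_neighborSet, hH]
      show (pG m).Adj (Sum.inl i) (Sum.inr (i, k))
      exact rfl
    have hsub3 : ({w 0, w 1, w 2} : Set _) ⊆ H.neighborSet v := by
      intro u hu
      rcases hu with h | h | h <;> subst h <;> [exact hadj 0; exact hadj 1; exact hadj 2]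
    have hw : ∀ k l : Fin 3, k ≠ l → w k ≠ w l := by
      intro k l hkl he
      apply hkl
      have := congrArg Subtype.val he
      simpa [w] using this
    have h3 : ({w 0, w 1, w 2} : Set _).ncard = 3 := by
      rw [Set.ncard_insert_of_notMem ?_ (Set.toFinite _), Set.ncard_pair (hw 1 2 (by decide))]
      simp only [Set.mem_insert_iff, Set.mem_singleton_iff]
      rintro (he | he)
      · exact hw 0 1 (by decide) he
      · exact hw 0 2 (by decide) he
    have hle3 := Set.ncard_le_ncard hsub3 (Set.toFinite _)
    have := h.2 v
    omega
  calc ∑ i : Fin m, (S.filter (fun x => proj x = i)).card ≤ ∑ _i : Fin m, 3 :=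
        Finset.sum_le_sum (fun i _ => hfib i)
    _ = 3 * m := by simp [mul_comm]

lemma lemB (φ : ℕ → ℝ)
    (hlb : ∀ (V : Type) [Fintype V] [DecidableEq V] (G : SimpleGraph V) [DecidableRel G.Adj],
      ∃ S : Finset V, IsLinearForest (G.induce (S : Set V)) ∧
        ∑ v, φ (G.degree v) ≤ (S.card : ℝ))
    (d : ℕ) (hd : 3 ≤ d) : 3 * φ 1 + φ d ≤ 3 := by
  set m := d - 2 with hm
  have hm1 : 1 ≤ m := by omega
  obtain ⟨S, hS1, hS2⟩ := hlb (Fin m ⊕ Fin m × Fin 3) (pG m)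
  have hsum : ∑ v, φ ((pG m).degree v) = (m : ℝ) * φ d + (3 * (m : ℝ)) * φ 1 := by
    rw [Fintype.sum_sum_type]
    have h1 : ∀ i : Fin m, (pG m).degree (Sum.inl i) = d := by
      intro i; rw [pG_degree_inl]; omega
    have h2 : ∀ p : Fin m × Fin 3, (pG m).degree (Sum.inr p) = 1 := pG_degree_inr
    simp only [h1, h2, Finset.sum_const, Finset.card_univ, Fintype.card_prod,
      Fintype.card_fin, nsmul_eq_mul]
    push_cast
    ring
  have hcard : S.card ≤ 3 * m := pG_card_bound S hS1
  have hle : (m : ℝ) * φ d + (3 * (m : ℝ)) * φ 1 ≤ 3 * (m : ℝ) := by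
    rw [← hsum]
    calc ∑ v, φ ((pG m).degree v) ≤ (S.card : ℝ) := hS2
      _ ≤ ((3 * m : ℕ) : ℝ) := by exact_mod_cast hcard
      _ = 3 * (m : ℝ) := by push_cast; ring
  have hmpos : (0 : ℝ) < m := by exact_mod_cast hm1
  have key : (m : ℝ) * (3 * φ 1 + φ d) ≤ (m : ℝ) * 3 := by nlinarith [hle]
  exact le_of_mul_le_mul_left (by linarith [key]) hmpos

/-- Every lower bound φ : ℕ → [0,1] for induced linear forests is dominated by f_ε
for some 0 ≤ ε ≤ 1/6. -/
theorem stmt5 (φ : ℕ → ℝ) (hφ : ∀ d, 0 ≤ φ d ∧ φ d ≤ 1)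
    (hlb : ∀ (V : Type) [Fintype V] [DecidableEq V] (G : SimpleGraph V) [DecidableRel G.Adj],
      ∃ S : Finset V, IsLinearForest (G.induce (S : Set V)) ∧
        ∑ v, φ (G.degree v) ≤ (S.card : ℝ)) :
    ∃ ε : ℝ, 0 ≤ ε ∧ ε ≤ 1/6 ∧ ∀ d, φ d ≤ fL ε d := by
  have hφ1 : φ 1 ≤ 1 := (hφ 1).2
  set ε : ℝ := max 0 (min (1/6) (1 - φ 1)) with hε
  refine ⟨ε, le_max_left _ _, ?_, ?_⟩
  · apply max_le (by norm_num)
    exact min_le_left _ _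
  · intro d
    have hA := lemA φ hlb
    match d with
    | 0 => simpa [fL] using (hφ 0).2
    | 1 =>
      have h1 : ε ≤ 1 - φ 1 := by
        apply max_le (by linarith)
        exact min_le_right _ _
      show φ 1 ≤ fL ε 1
      rw [fL]
      norm_num
      linarith
    | 2 =>
      show φ 2 ≤ fL ε 2
      rw [fL]
      norm_num
      have := hA 2
      push_cast at this
      linarith
    | (n + 3) =>
      show φ (n + 3) ≤ fL ε (n + 3)
      rw [fL, if_neg (by omega), if_neg (by omega), if_neg (by omega)]
      have hAd := hA (n + 3)
      push_cast at hAd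
      have hn : (0 : ℝ) ≤ (n : ℝ) := Nat.cast_nonneg n
      have hφd0 : 0 ≤ φ (n + 3) := (hφ (n + 3)).1
      have hup : φ (n + 3) ≤ 2 / (((n + 3 : ℕ) : ℝ) + 1) := by
        rw [le_div_iff₀ (by push_cast; linarith)]
        push_cast
        nlinarith [hAd]
      refine le_min ?_ hup
      rcases le_or_gt (1/6 : ℝ) (1 - φ 1) with hc | hc
      · have hεeq : ε = 1/6 := by
          rw [hε, min_eq_left hc, max_eq_right (by norm_num)]
        rw [hεeq]
        nlinarith [hAd, hφd0, hn]
      · have h0 : 0 ≤ 1 - φ 1 := by linarith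
        have hεeq : ε = 1 - φ 1 := by
          rw [hε, min_eq_right (le_of_lt hc), max_eq_right h0]
        have hB := lemB φ hlb (n + 3) (by omega)
        rw [hεeq]
        linarith
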